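/- arXiv:1301.4429 — 3 statements merged into one kernel-verified Lean document; each statement's English description precedes it below -/
import Mathlib

section
/- Let A be an abelian group and let L(A) be the group of families (a_n)_{n≥1} of elements of A satisfying (n/m)·a_n = a_m whenever m ∣ n. Then the image of the projection homomorphism L(A) → A sending (a_n)_{n≥1} to a_1 is exactly the set of elements of A that belong to some divisible subgroup of A; in other words, this image is the maximal divisible subgroup Div(A) of A. -/
/-- Let `A` be an abelian group and `L(A)` the group of families
`(a n)_{n ≥ 1}` of elements of `A` with `(n / m) • a n = a m` whenever `m ∣ n`
(the inverse limit of the constant system `A` with transition maps multiplication by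
`n / m`). Then the image of the projection `L(A) → A`, `(a n) ↦ a 1`, is exactly the
set of elements of `A` belonging to some divisible subgroup of `A`, i.e. the maximal
divisible subgroup `Div(A)`. Stated elementwise: `x : A` is the first entry of such
a family iff `x` belongs to some divisible subgroup `D ≤ A`. -/
theorem image_of_limit_eq_maximal_divisible (A : Type*) [AddCommGroup A] (x : A) :
    (∃ a : ℕ+ → A,
        (∀ m n : ℕ+, (m : ℕ) ∣ (n : ℕ) → ((n : ℕ) / (m : ℕ)) • a n = a m) ∧ a 1 = x) ↔
      ∃ D : AddSubgroup A,
        (∀ d ∈ D, ∀ n : ℕ, 1 ≤ n → ∃ d' ∈ D, n • d' = d) ∧ x ∈ D := by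
  constructor
  · rintro ⟨a, ha, ha1⟩
    -- D := set of elements arising as first entry of a coherent family
    refine ⟨{
      carrier := {y | ∃ b : ℕ+ → A,
        (∀ m n : ℕ+, (m : ℕ) ∣ (n : ℕ) → ((n : ℕ) / (m : ℕ)) • b n = b m) ∧ b 1 = y}
      zero_mem' := ⟨fun _ => 0, fun m n _ => smul_zero _, rfl⟩
      add_mem' := ?_
      neg_mem' := ?_ }, ?_, ⟨a, ha, ha1⟩⟩
    · rintro y z ⟨b, hb, hb1⟩ ⟨c, hc, hc1⟩
      exact ⟨fun n => b n + c n, fun m n h => by rw [smul_add, hb m n h, hc m n h],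
        by show b 1 + c 1 = y + z; rw [hb1, hc1]⟩
    · rintro y ⟨b, hb, hb1⟩
      exact ⟨fun n => -b n, fun m n h => by rw [smul_neg, hb m n h], by show -b 1 = -y; rw [hb1]⟩
    · rintro d ⟨b, hb, hb1⟩ n hn
      lift n to ℕ+ using hn
      refine ⟨b n, ⟨fun k => b (n * k), fun m k h => ?_, by show b (n * 1) = b n; rw [mul_one]⟩, ?_⟩
      · have : ((n * k : ℕ+) : ℕ) / ((n * m : ℕ+) : ℕ) = (k : ℕ) / (m : ℕ) := by
          push_cast
          exact Nat.mul_div_mul_left _ _ n.pos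
        have := hb (n * m) (n * k) (by push_cast; exact mul_dvd_mul_left _ h)
        rwa [PNat.mul_coe, PNat.mul_coe, Nat.mul_div_mul_left _ _ n.pos] at this
      · have := hb 1 n (one_dvd _)
        simpa [hb1] using this
  · rintro ⟨D, hdiv, hx⟩
    -- D is a divisible group; extend `n ↦ n • x : ℤ →+ D` to `ℚ →+ D`.
    have : DivisibleBy D ℕ := by
      refine ⟨fun d n => if h : n = 0 then 0 else
        ⟨(hdiv d d.2 n (Nat.one_le_iff_ne_zero.2 h)).choose,
         (hdiv d d.2 n (Nat.one_le_iff_ne_zero.2 h)).choose_spec.1⟩, fun a => by simp, ?_⟩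
      intro n d hn
      simp only [dif_neg hn]
      ext
      push_cast
      exact (hdiv d d.2 n (Nat.one_le_iff_ne_zero.2 hn)).choose_spec.2
    have : DivisibleBy D ℤ := AddGroup.divisibleByIntOfDivisibleByNat D
    have baer : Module.Baer ℤ D := Module.Baer.of_divisible D
    obtain ⟨h, hh⟩ := baer.extension_property_addMonoidHom (Int.castAddHom ℚ)
      Int.cast_injective (zmultiplesHom D ⟨x, hx⟩)
    refine ⟨fun n => (h (1 / (n : ℚ)) : A), ?_, ?_⟩
    · intro m n hmn
      obtain ⟨k, hk⟩ := hmn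
      have hm : (m : ℚ) ≠ 0 := by exact_mod_cast m.ne_zero
      have hn : (n : ℚ) ≠ 0 := by positivity
      have : ((n : ℕ) / (m : ℕ)) • h (1 / (n : ℚ)) = h (1 / (m : ℚ)) := by
        rw [hk, Nat.mul_div_cancel_left _ m.pos, ← map_nsmul]
        congr 1
        have : (k : ℚ) ≠ 0 := by
          rcases Nat.eq_zero_or_pos k with h0 | h0
          · exfalso; rw [h0, mul_zero] at hk; exact n.ne_zero hk
          · exact_mod_cast h0.ne'
        rw [nsmul_eq_mul]
        field_simp
        push_cast; ring
      calc ((n : ℕ) / (m : ℕ)) • ((h (1 / (n : ℚ)) : D) : A)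
          = ((((n : ℕ) / (m : ℕ)) • h (1 / (n : ℚ)) : D) : A) := by push_cast; rfl
        _ = ((h (1 / (m : ℚ)) : D) : A) := by rw [this]
    · have := DFunLike.congr_fun hh (1 : ℤ)
      simp only [AddMonoidHom.coe_comp, Function.comp_apply, Int.coe_castAddHom,
        Int.cast_one, zmultiplesHom_apply, one_zsmul] at this
      simp [this]
end

section
/- Let (A_n)_{n∈ℕ} be a tower of abelian groups with homomorphisms f_n : A_{n+1} → A_n. Suppose that each A_n contains a subgroup B_n with f_n(B_{n+1}) ⊆ B_n, that each quotient A_n/B_n is finite, and that the tower (B_n) is Mittag–Leffler zero, i.e., for every n there exists m ≥ n such that the composite transition map B_m → B_n is the zero map. Then the homomorphism d : Π_{n∈ℕ} A_n → Π_{n∈ℕ} A_n defined by d((a_n)_n) = (a_n − f_n(a_{n+1}))_n is surjective; equivalently, lim¹ of the tower (A_n) vanishes. -/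
/-- Composite transition map `A (n + m) →+ A n` of a tower `(A n, f n : A (n+1) →+ A n)`:
the composition `f n ∘ f (n+1) ∘ ⋯ ∘ f (n+m-1)`. -/
def transComp (A : ℕ → Type*) [∀ n, AddCommGroup (A n)]
    (f : ∀ n, A (n + 1) →+ A n) : ∀ n m : ℕ, A (n + m) →+ A n
  | n, 0 => AddMonoidHom.id (A n)
  | n, m + 1 => (transComp A f n m).comp (f (n + m))

section aux
variable {A : ℕ → Type*} [∀ n, AddCommGroup (A n)] (f : ∀ n, A (n + 1) →+ A n)

lemma f_heq {i j : ℕ} (e : i = j) {x : A (i + 1)} {y : A (j + 1)} (h : HEq x y) :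
    HEq (f i x) (f j y) := by subst e; rw [eq_of_heq h]

lemma f_transComp (n : ℕ) : ∀ (k : ℕ) (x : A (n + 1 + k)) (x' : A (n + (k + 1))),
    HEq x x' → f n (transComp A f (n + 1) k x) = transComp A f n (k + 1) x'
  | 0, x, x', h => by rw [eq_of_heq h]; rfl
  | k + 1, x, x', h => f_transComp n k (f (n + 1 + k) x) (f (n + (k + 1)) x')
      (f_heq f (by omega) h)

lemma transComp_add (n m : ℕ) : ∀ (k : ℕ) (x : A (n + (m + k))) (x' : A (n + m + k)),
    HEq x x' → transComp A f n (m + k) x = transComp A f n m (transComp A f (n + m) k x')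
  | 0, x, x', h => by rw [eq_of_heq h]; rfl
  | k + 1, x, x', h => transComp_add n m k (f (n + (m + k)) x) (f (n + m + k) x')
      (f_heq f (by omega) h)

end aux

section aux2
variable {A : ℕ → Type*} [∀ n, AddCommGroup (A n)] (f : ∀ n, A (n + 1) →+ A n)
variable (B : ∀ n, AddSubgroup (A n))

lemma mem_heq {i j : ℕ} (e : i = j) {x : A i} {y : A j} (h : HEq x y) (hx : x ∈ B i) :
    y ∈ B j := by subst e; exact eq_of_heq h ▸ hx

lemma transComp_mem (hfB : ∀ n, ∀ x ∈ B (n + 1), f n x ∈ B n) (n : ℕ) :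
    ∀ (k : ℕ) (x : A (n + k)), x ∈ B (n + k) → transComp A f n k x ∈ B n
  | 0, x, hx => hx
  | k + 1, x, hx => transComp_mem hfB n k (f (n + k) x) (hfB (n + k) x hx)

lemma transComp_range_le (n : ℕ) {m m' : ℕ} (h : m ≤ m') :
    (transComp A f n m').range ≤ (transComp A f n m).range := by
  obtain ⟨j, rfl⟩ := Nat.exists_eq_add_of_le h
  rintro x ⟨a, rfl⟩
  refine ⟨transComp A f (n + m) j (cast (congrArg A (by omega)) a), ?_⟩
  exact (transComp_add f n m j a _ (cast_heq _ _).symm).symm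

lemma transComp_eq_zero (hfB : ∀ n, ∀ x ∈ B (n + 1), f n x ∈ B n) {n m : ℕ}
    (h0 : ∀ b ∈ B (n + m), transComp A f n m b = 0)
    {k : ℕ} (hk : m ≤ k) (b : A (n + k)) (hb : b ∈ B (n + k)) :
    transComp A f n k b = 0 := by
  obtain ⟨j, rfl⟩ := Nat.exists_eq_add_of_le hk
  set b' : A (n + m + j) := cast (congrArg A (by omega)) b with hb'
  rw [transComp_add f n m j b b' (cast_heq _ _).symm]
  exact h0 _ (transComp_mem f B hfB (n + m) j b'
    (mem_heq B (by omega) (cast_heq _ _).symm hb))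

lemma pi_heq (y : ∀ n, A n) {i j : ℕ} (e : i = j) : HEq (y i) (y j) := by subst e; rfl

end aux2

section stab
variable {A : ℕ → Type*} [∀ n, AddCommGroup (A n)] (f : ∀ n, A (n + 1) →+ A n)
variable (B : ∀ n, AddSubgroup (A n))

lemma exists_stab (hfin : ∀ n, Finite (A n ⧸ B n)) (n : ℕ) :
    ∃ N : ℕ, ∀ m, N ≤ m →
      B n ⊔ (transComp A f n m).range = B n ⊔ (transComp A f n N).range := by
  have := hfin n
  set J : ℕ → AddSubgroup (A n) := fun m => B n ⊔ (transComp A f n m).range with hJ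
  have hJanti : ∀ {m m'}, m ≤ m' → J m' ≤ J m := fun h =>
    sup_le_sup_left (transComp_range_le f n h) _
  set π := QuotientAddGroup.mk' (B n) with hπ
  set K : ℕ → AddSubgroup (A n ⧸ B n) := fun m => (J m).map π with hK
  set c : ℕ → ℕ := fun m => Nat.card (K m) with hc
  obtain ⟨N, hN⟩ : ∃ N, c N = sInf (Set.range c) := Nat.sInf_mem (Set.range_nonempty c)
  refine ⟨N, fun m hm => ?_⟩
  have h1 : J m ≤ J N := hJanti hm
  have hKeq : K m = K N := by
    have hle : (K m : Set (A n ⧸ B n)) ⊆ (K N : Set (A n ⧸ B n)) :=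
      AddSubgroup.map_mono h1
    have hcard : c N ≤ c m := by rw [hN]; exact Nat.sInf_le ⟨m, rfl⟩
    refine SetLike.ext' (Set.eq_of_subset_of_ncard_le hle ?_ (Set.toFinite _))
    rw [← Nat.card_coe_set_eq, ← Nat.card_coe_set_eq]; exact hcard
  have hcomap : ∀ m, (K m).comap π = J m := by
    intro m
    rw [hK, AddSubgroup.comap_map_eq, hπ, QuotientAddGroup.ker_mk',
      sup_eq_left.mpr le_sup_left]
  show J m = J N
  rw [← hcomap m, ← hcomap N, hKeq]

end stab

/-- Let `(A n)` be a tower of abelian groups with transition maps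
`f n : A (n+1) →+ A n`. Suppose each `A n` contains a subgroup `B n` with
`f n (B (n+1)) ⊆ B n`, each quotient `A n ⧸ B n` is finite, and the tower `(B n)` is
Mittag–Leffler zero: for every `n` there is `m` such that the composite transition map
`B (n+m) → B n` is zero. Then the map `d : Π n, A n → Π n, A n`,
`d a = (a n - f n (a (n+1)))_n`, is surjective; i.e. `lim¹` of the tower vanishes. -/
theorem lim_one_vanishes (A : ℕ → Type*) [∀ n, AddCommGroup (A n)]
    (f : ∀ n, A (n + 1) →+ A n)
    (B : ∀ n, AddSubgroup (A n))
    (hfB : ∀ n, ∀ x ∈ B (n + 1), f n x ∈ B n)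
    (hfin : ∀ n, Finite (A n ⧸ B n))
    (hML : ∀ n, ∃ m : ℕ, ∀ b ∈ B (n + m), transComp A f n m b = 0) :
    ∀ y : ∀ n, A n, ∃ a : ∀ n, A n, ∀ n, a n - f n (a (n + 1)) = y n := by
  intro y
  classical
  -- monotone stabilization bounds from finiteness
  choose N0 hN0 using exists_stab f B hfin
  set N : ℕ → ℕ := fun n => Nat.rec (N0 0) (fun k acc => max (N0 (k + 1)) acc) n with hNdef
  have hNsucc : ∀ n, N n ≤ N (n + 1) := fun n => le_max_right _ _
  have hN0le : ∀ n, N0 n ≤ N n := fun n => by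
    cases n with
    | zero => exact le_rfl
    | succ k => exact le_max_left _ _
  set I : ∀ n, AddSubgroup (A n) :=
    fun n => B n ⊔ (transComp A f n (N n)).range with hI
  have hstab : ∀ n m, N n ≤ m → B n ⊔ (transComp A f n m).range = I n := by
    intro n m hm
    show B n ⊔ (transComp A f n m).range = B n ⊔ (transComp A f n (N n)).range
    rw [hN0 n m (le_trans (hN0le n) hm), hN0 n (N n) (hN0le n)]
  -- Step 1: solve modulo I using partial sums
  set t : ∀ n, ℕ → A n := fun n k => transComp A f n k (y (n + k)) with ht
  set a1 : ∀ n, A n := fun n => ∑ k ∈ Finset.range (N n), t n k with ha1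
  set z : ∀ n, A n := fun n => y n - (a1 n - f n (a1 (n + 1))) with hz
  have hzI : ∀ n, z n ∈ I n := by
    intro n
    have hfa : f n (a1 (n + 1)) = ∑ k ∈ Finset.range (N (n + 1)), t n (k + 1) := by
      rw [ha1]
      simp only [map_sum]
      refine Finset.sum_congr rfl fun k _ => ?_
      exact f_transComp f n k (y (n + 1 + k)) (y (n + (k + 1))) (pi_heq y (by omega))
    have h0 : t n 0 = y n := rfl
    have hzsum : z n = ∑ k ∈ Finset.Ico (N n) (N (n + 1) + 1), t n k := by
      simp only [hz]
      rw [hfa, Finset.sum_Ico_eq_sub _ (le_trans (hNsucc n) (Nat.le_succ (N (n + 1)))),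
        Finset.sum_range_succ' (t n), h0]
      simp only [ha1]
      abel
    rw [hzsum]
    refine sum_mem fun k hk => ?_
    have hk' : N n ≤ k := (Finset.mem_Ico.mp hk).1
    have hmem : t n k ∈ (transComp A f n (N n)).range :=
      transComp_range_le f n hk' ⟨y (n + k), rfl⟩
    exact AddSubgroup.mem_sup_right hmem
  -- Step 2: surjectivity-type step from stabilization
  have key : ∀ n (x : A n), x ∈ I n → ∃ x', x' ∈ I (n + 1) ∧ x - f n x' ∈ B n := by
    intro n x hx
    have hx' : x ∈ B n ⊔ (transComp A f n (N (n + 1) + 1)).range := by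
      rw [hstab n (N (n + 1) + 1) (le_trans (hNsucc n) (Nat.le_succ _))]; exact hx
    obtain ⟨b, hb, r, hr, rfl⟩ := AddSubgroup.mem_sup.mp hx'
    obtain ⟨a, rfl⟩ := hr
    set a' : A (n + 1 + N (n + 1)) := cast (congrArg A (by omega)) a with ha'
    refine ⟨transComp A f (n + 1) (N (n + 1)) a',
      AddSubgroup.mem_sup_right ⟨a', rfl⟩, ?_⟩
    have hfa : f n (transComp A f (n + 1) (N (n + 1)) a')
        = transComp A f n (N (n + 1) + 1) a :=
      f_transComp f n (N (n + 1)) a' a (cast_heq _ _)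
    rw [hfa]
    simpa using hb
  -- build the recursive corrector c
  obtain ⟨c, hcstep⟩ : ∃ c : ∀ n, A n,
      ∀ n, (c n - z n) - f n (c (n + 1)) ∈ B n := by
    let g : ∀ n, {x : A n // x ∈ I n} := fun n => Nat.rec ⟨0, zero_mem _⟩
      (fun k p => ⟨(key k (p.1 - z k) (sub_mem p.2 (hzI k))).choose,
        (key k (p.1 - z k) (sub_mem p.2 (hzI k))).choose_spec.1⟩) n
    exact ⟨fun n => (g n).1,
      fun n => (key n ((g n).1 - z n) (sub_mem (g n).2 (hzI n))).choose_spec.2⟩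
  set w : ∀ n, A n := fun n => z n - (c n - f n (c (n + 1))) with hwdef
  have hwB : ∀ n, w n ∈ B n := by
    intro n
    have hrw : w n = -((c n - z n) - f n (c (n + 1))) := by simp only [hwdef]; abel
    rw [hrw]
    exact neg_mem (hcstep n)
  -- Step 3: solve exactly inside B using ML-zero
  choose P0 hP0 using hML
  set P : ℕ → ℕ := fun n => Nat.rec (P0 0) (fun k acc => max (P0 (k + 1)) acc) n with hPdef
  have hPsucc : ∀ n, P n ≤ P (n + 1) := fun n => le_max_right _ _
  have hP0le : ∀ n, P0 n ≤ P n := fun n => by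
    cases n with
    | zero => exact le_rfl
    | succ k => exact le_max_left _ _
  set s : ∀ n, ℕ → A n := fun n k => transComp A f n k (w (n + k)) with hs
  have hsvan : ∀ n k, P n ≤ k → s n k = 0 := fun n k hk =>
    transComp_eq_zero f B hfB (hP0 n) (le_trans (hP0le n) hk) (w (n + k)) (hwB (n + k))
  set a3 : ∀ n, A n := fun n => ∑ k ∈ Finset.range (P n), s n k with ha3
  have ha3eq : ∀ n, a3 n - f n (a3 (n + 1)) = w n := by
    intro n
    have hfa : f n (a3 (n + 1)) = ∑ k ∈ Finset.range (P (n + 1)), s n (k + 1) := by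
      rw [ha3]
      simp only [map_sum]
      refine Finset.sum_congr rfl fun k _ => ?_
      exact f_transComp f n k (w (n + 1 + k)) (w (n + (k + 1))) (pi_heq w (by omega))
    have h0 : s n 0 = w n := rfl
    have hvan : ∑ k ∈ Finset.Ico (P n) (P (n + 1) + 1), s n k = 0 :=
      Finset.sum_eq_zero fun k hk => hsvan n k (Finset.mem_Ico.mp hk).1
    have hsub := Finset.sum_Ico_eq_sub (s n) (le_trans (hPsucc n) (Nat.le_succ (P (n + 1))))
    rw [Finset.sum_range_succ' (s n), h0] at hsub
    simp only [ha3]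
    rw [hfa]
    set S1 := ∑ k ∈ Finset.range (P n), s n k with hS1
    set S2 := ∑ k ∈ Finset.range (P (n + 1)), s n (k + 1) with hS2
    have goal' : (S1 - S2) - w n = 0 := by
      have habel : (S1 - S2) - w n = -((S2 + w n) - S1) := by abel
      rw [habel, ← hsub, hvan, neg_zero]
    exact sub_eq_zero.mp goal'
  -- assemble
  refine ⟨fun n => a1 n + c n + a3 n, fun n => ?_⟩
  have hsplit : a1 n + c n + a3 n - f n (a1 (n + 1) + c (n + 1) + a3 (n + 1))
      = (a1 n - f n (a1 (n + 1))) + (c n - f n (c (n + 1))) + (a3 n - f n (a3 (n + 1))) := by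
    rw [map_add, map_add]; abel
  rw [hsplit, ha3eq n]
  simp only [hwdef, hz]
  abel
end

section
/- Let A and B be abelian groups, and suppose given for each integer n ≥ 1 a short exact sequence of abelian groups 0 → A/nA →^{ι_n} K_n →^{π_n} B[n] → 0, together with, for all m ∣ n, homomorphisms k_{n,m} : K_n → K_m forming an inverse system over the positive integers ordered by divisibility (k_{n,n} = id and k_{m,l} ∘ k_{n,m} = k_{n,l} for l ∣ m ∣ n), compatible with the transition maps on both sides: k_{n,m} ∘ ι_n = ι_m ∘ pr_{n,m}, where pr_{n,m} : A/nA → A/mA is the natural projection, and π_m ∘ k_{n,m} = (n/m)·π_n. Then the induced sequence of inverse limits 0 → lim_n A/nA → lim_n K_n → lim_n B[n] → 0 is exact; in particular lim_n K_n surjects onto the Tate module T(B) = lim_n B[n]. -/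
/-- The subgroup `nA = {n • a : a ∈ A}` of an abelian group `A`. -/
def nMul (A : Type*) [AddCommGroup A] (n : ℕ) : AddSubgroup A where
  carrier := {x | ∃ a : A, n • a = x}
  zero_mem' := ⟨0, smul_zero n⟩
  add_mem' := by
    rintro x y ⟨a, rfl⟩ ⟨b, rfl⟩
    exact ⟨a + b, by rw [smul_add]⟩
  neg_mem' := by
    rintro x ⟨a, rfl⟩
    exact ⟨-a, by rw [smul_neg]⟩

/-- Let `A`, `B` be abelian groups and, for each `n ≥ 1`, let
`0 → A/nA →^{ι n} K n →^{π n} B[n] → 0` be a short exact sequence (here `π n` is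
expressed as a map `K n →+ B` landing in `B[n]` and surjecting onto it), together with
transition homomorphisms `k m n h : K n →+ K m` for `m ∣ n` forming an inverse system
over divisibility, compatible with the natural projections `A/nA → A/mA` on the left
and with multiplication by `n/m` on `B[n] → B[m]` on the right. Then the induced
sequence of inverse limits `0 → lim_n A/nA → lim_n K n → lim_n B[n] → 0` is exact;
in particular `lim_n K n` surjects onto the Tate module `T(B) = lim_n B[n]`.
Compatibility of a family in `Π n, A ⧸ nMul A n` with the projections is expressed via
representatives: whenever `m ∣ n` and `a : A` represents the `n`-th component, it also
represents the `m`-th component. -/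
theorem limit_sequence_exact (A B : Type*) [AddCommGroup A] [AddCommGroup B]
    (K : ℕ+ → Type*) [∀ n, AddCommGroup (K n)]
    (ι : ∀ n : ℕ+, (A ⧸ nMul A (n : ℕ)) →+ K n)
    (π : ∀ n : ℕ+, K n →+ B)
    (k : ∀ m n : ℕ+, (m : ℕ) ∣ (n : ℕ) → (K n →+ K m))
    -- each row is a short exact sequence
    (hι : ∀ n : ℕ+, Function.Injective (ι n))
    (hexact : ∀ (n : ℕ+) (y : K n), π n y = 0 ↔ ∃ x, ι n x = y)
    (hπtor : ∀ (n : ℕ+) (y : K n), (n : ℕ) • π n y = 0)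
    (hπsurj : ∀ (n : ℕ+) (b : B), (n : ℕ) • b = 0 → ∃ y : K n, π n y = b)
    -- (K n, k) is an inverse system over the positive integers ordered by divisibility
    (hid : ∀ (n : ℕ+) (h : (n : ℕ) ∣ (n : ℕ)) (y : K n), k n n h y = y)
    (hcomp : ∀ (l m n : ℕ+) (hlm : (l : ℕ) ∣ (m : ℕ)) (hmn : (m : ℕ) ∣ (n : ℕ)) (y : K n),
      k l m hlm (k m n hmn y) = k l n (dvd_trans hlm hmn) y)
    -- compatibility with the transition maps on both sides
    (hkι : ∀ (m n : ℕ+) (h : (m : ℕ) ∣ (n : ℕ)) (a : A),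
      k m n h (ι n (QuotientAddGroup.mk a)) = ι m (QuotientAddGroup.mk a))
    (hπk : ∀ (m n : ℕ+) (h : (m : ℕ) ∣ (n : ℕ)) (y : K n),
      π m (k m n h y) = ((n : ℕ) / (m : ℕ)) • π n y) :
    -- injectivity of lim_n A/nA → lim_n K n
    (∀ x x' : ∀ n : ℕ+, A ⧸ nMul A (n : ℕ),
      (∀ (m n : ℕ+) (_ : (m : ℕ) ∣ (n : ℕ)) (a : A),
        (QuotientAddGroup.mk a : A ⧸ nMul A (n : ℕ)) = x n →
        (QuotientAddGroup.mk a : A ⧸ nMul A (m : ℕ)) = x m) →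
      (∀ (m n : ℕ+) (_ : (m : ℕ) ∣ (n : ℕ)) (a : A),
        (QuotientAddGroup.mk a : A ⧸ nMul A (n : ℕ)) = x' n →
        (QuotientAddGroup.mk a : A ⧸ nMul A (m : ℕ)) = x' m) →
      (∀ n : ℕ+, ι n (x n) = ι n (x' n)) → x = x') ∧
    -- exactness at lim_n K n
    (∀ y : ∀ n : ℕ+, K n,
      (∀ (m n : ℕ+) (h : (m : ℕ) ∣ (n : ℕ)), k m n h (y n) = y m) →
      ((∀ n : ℕ+, π n (y n) = 0) ↔
        ∃ x : ∀ n : ℕ+, A ⧸ nMul A (n : ℕ),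
          (∀ (m n : ℕ+) (_ : (m : ℕ) ∣ (n : ℕ)) (a : A),
            (QuotientAddGroup.mk a : A ⧸ nMul A (n : ℕ)) = x n →
            (QuotientAddGroup.mk a : A ⧸ nMul A (m : ℕ)) = x m) ∧
          ∀ n : ℕ+, ι n (x n) = y n)) ∧
    -- surjectivity of lim_n K n → lim_n B[n] = T(B)
    (∀ b : ∀ n : ℕ+, B,
      (∀ n : ℕ+, (n : ℕ) • b n = 0) →
      (∀ (m n : ℕ+) (_ : (m : ℕ) ∣ (n : ℕ)), ((n : ℕ) / (m : ℕ)) • b n = b m) →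
      ∃ y : ∀ n : ℕ+, K n,
        (∀ (m n : ℕ+) (h : (m : ℕ) ∣ (n : ℕ)), k m n h (y n) = y m) ∧
        ∀ n : ℕ+, π n (y n) = b n) := by

  refine ⟨?_, ?_, ?_⟩
  · -- injectivity
    intro x x' _ _ heq
    funext n
    exact hι n (heq n)
  · -- exactness in the middle
    intro y hy
    constructor
    · intro h0
      choose x hx using fun n => (hexact n (y n)).mp (h0 n)
      refine ⟨x, ?_, hx⟩
      intro m n hmn a ha
      apply hι m
      rw [← hkι m n hmn a, ha, hx n, hy m n hmn, hx m]
    · rintro ⟨x, -, hx⟩ n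
      rw [← hx n]
      exact (hexact n _).mpr ⟨_, rfl⟩
  · -- surjectivity onto T(B)
    intro b hbt hbc
    set f : ℕ → ℕ+ := fun j => ⟨Nat.factorial j, Nat.factorial_pos j⟩ with hf
    have hfd : ∀ i j : ℕ, i ≤ j → ((f i : ℕ) ∣ (f j : ℕ)) :=
      fun i j hij => Nat.factorial_dvd_factorial hij
    have hnf : ∀ n : ℕ+, (n : ℕ) ∣ ((f (n : ℕ)) : ℕ) :=
      fun n => Nat.dvd_factorial n.pos le_rfl
    have step : ∀ (m n : ℕ+) (h : (m : ℕ) ∣ (n : ℕ)) (zm : K m), π m zm = b m →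
        ∃ zn : K n, k m n h zn = zm ∧ π n zn = b n := by
      intro m n h zm hzm
      obtain ⟨w, hw⟩ := hπsurj n (b n) (hbt n)
      have h0 : π m (k m n h w - zm) = 0 := by
        rw [map_sub, hπk, hw, hbc m n h, hzm, sub_self]
      obtain ⟨x, hx⟩ := (hexact m _).mp h0
      obtain ⟨a, rfl⟩ := QuotientAddGroup.mk_surjective x
      refine ⟨w - ι n (QuotientAddGroup.mk a), ?_, ?_⟩
      · rw [map_sub, hkι, hx, sub_sub_cancel]
      · have hz : π n (ι n (QuotientAddGroup.mk a)) = 0 := (hexact n _).mpr ⟨_, rfl⟩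
        rw [map_sub, hw, hz, sub_zero]
    obtain ⟨z0, hz0⟩ := hπsurj (f 0) (b (f 0)) (hbt (f 0))
    choose! w hw hPw using fun j => step (f j) (f (j + 1)) (hfd j (j + 1) (Nat.le_succ j))
    set Z : ∀ j : ℕ, K (f j) := fun j => Nat.rec z0 (fun j zj => w j zj) j with hZ
    have hPZ : ∀ j, π (f j) (Z j) = b (f j) := by
      intro j
      induction j with
      | zero => exact hz0
      | succ j ih => exact hPw j (Z j) ih
    have hchain1 : ∀ j, k (f j) (f (j + 1)) (hfd j (j + 1) (Nat.le_succ j)) (Z (j + 1)) = Z j :=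
      fun j => hw j (Z j) (hPZ j)
    have hchain : ∀ i j (hij : i ≤ j), k (f i) (f j) (hfd i j hij) (Z j) = Z i := by
      intro i j hij
      induction j, hij using Nat.le_induction with
      | base => exact hid (f i) _ _
      | succ j hij ih =>
        rw [← hcomp (f i) (f j) (f (j + 1)) (hfd i j hij) (hfd j (j + 1) (Nat.le_succ j)),
          hchain1, ih]
    refine ⟨fun n => k n (f (n : ℕ)) (hnf n) (Z (n : ℕ)), ?_, ?_⟩
    · intro m n h
      have hmn : (m : ℕ) ≤ (n : ℕ) := Nat.le_of_dvd n.pos h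
      rw [hcomp m n (f (n : ℕ)) h (hnf n),
        ← hcomp m (f (m : ℕ)) (f (n : ℕ)) (hnf m) (hfd _ _ hmn), hchain _ _ hmn]
    · intro n
      rw [hπk n (f (n : ℕ)) (hnf n) (Z (n : ℕ)), hPZ, hbc n (f (n : ℕ)) (hnf n)]
end
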